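/- Commutator bound, H^{0,1/2} version (Lemma 5.2, bound (com3)): Let s > (d+1)/2. There is a constant C, depending on d, s and k, such that for every f ∈ H^{s,1/2}(𝕋^d) and every trigonometric polynomial u on 𝕋^d, ‖f·P[∂_α u] − P[f·∂_α u]‖_{H^{0,1/2}(𝕋^d)} ≤ C ‖f‖_{H^{s,1/2}} ‖u‖_{H^{0,1/2}}; consequently the commutator [f,P]∂_α extends to a bounded operator on H^{0,1/2}(𝕋^d) with norm at most C‖f‖_{H^{s,1/2}}. -/

import Mathlib

noncomputable section
open scoped BigOperators
open Filter

/-- The frequency lattice `ℤ^d` of the torus `𝕋^d`. -/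
abbrev Freq (d : ℕ) := Fin d → ℤ

/-- A function on `𝕋^d`, represented by its sequence of Fourier coefficients. -/
abbrev Coeffs (d : ℕ) := Freq d → ℂ

variable {d : ℕ}

/-- The pairing `⟨j, k⟩` between a lattice frequency and the frequency vector `k ∈ ℝ^d`. -/
def dotk (k : Fin d → ℝ) (j : Freq d) : ℝ := ∑ i, (j i : ℝ) * k i

/-- The Japanese bracket `⟨j⟩ = (1+|j|²)^{1/2}`. -/
def jb (j : Freq d) : ℝ := Real.sqrt (1 + ∑ i, ((j i : ℝ)) ^ 2)

/-- The entries of `k` are linearly independent over `ℚ` (equivalently, over `ℤ`). -/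
def Indep (k : Fin d → ℝ) : Prop := ∀ j : Freq d, dotk k j = 0 → j = 0

/-- The weight defining the anisotropic Sobolev norm `H^{s,θ}`. -/
def wt (k : Fin d → ℝ) (s θ : ℝ) (j : Freq d) : ℝ :=
  jb j ^ (2 * s) * (1 + (dotk k j) ^ 2) ^ θ

/-- Membership in the anisotropic Sobolev space `H^{s,θ}(𝕋^d)`. -/
def MemSob (k : Fin d → ℝ) (s θ : ℝ) (u : Coeffs d) : Prop :=
  Summable (fun j : Freq d => wt k s θ j * ‖u j‖ ^ 2)

/-- The `H^{s,θ}(𝕋^d)` norm. -/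
def sobNorm (k : Fin d → ℝ) (s θ : ℝ) (u : Coeffs d) : ℝ :=
  Real.sqrt (∑' j : Freq d, wt k s θ j * ‖u j‖ ^ 2)

/-- Membership in the Sobolev space `H^s(𝕋^d)`; `H^0 = L²`. -/
def MemHs (s : ℝ) (u : Coeffs d) : Prop :=
  Summable (fun j : Freq d => jb j ^ (2 * s) * ‖u j‖ ^ 2)

/-- The `H^s(𝕋^d)` norm; for `s = 0` this is the `L²(𝕋^d)` norm (spectrally normalized). -/
def HsNorm (s : ℝ) (u : Coeffs d) : ℝ :=
  Real.sqrt (∑' j : Freq d, jb j ^ (2 * s) * ‖u j‖ ^ 2)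

/-- The value of the function with Fourier coefficients `u` at the point `α ∈ 𝕋^d = ℝ^d/(2πℤ)^d`,
namely `Σ_j û_j e^{i⟨j,α⟩}`. -/
def value (u : Coeffs d) (α : Fin d → ℝ) : ℂ :=
  ∑' j : Freq d, u j * Complex.exp (Complex.I * ((∑ i, (j i : ℝ) * α i : ℝ) : ℂ))

/-- The squared norm of the space `ℋ^σ = H^σ × H^{σ,1/2}`. -/
def HHnormSq (k : Fin d → ℝ) (σ : ℝ) (W R : Coeffs d) : ℝ :=
  HsNorm σ W ^ 2 + sobNorm k σ (1/2) R ^ 2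

/-- The norm of the space `ℋ^σ = H^σ × H^{σ,1/2}`. -/
def HHnorm (k : Fin d → ℝ) (σ : ℝ) (W R : Coeffs d) : ℝ :=
  Real.sqrt (HHnormSq k σ W R)

/-- Membership in `ℋ^σ = H^σ × H^{σ,1/2}`. -/
def MemHH (k : Fin d → ℝ) (σ : ℝ) (W R : Coeffs d) : Prop :=
  MemHs σ W ∧ MemSob k σ (1/2) R

/-- The directional derivative `∂_α = k₁∂₁+⋯+k_d∂_d`, acting on Fourier coefficients
by multiplication by `i⟨j,k⟩`. -/
def dAl (k : Fin d → ℝ) (u : Coeffs d) : Coeffs d :=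
  fun j => Complex.I * (dotk k j : ℝ) * u j

/-- The projection `P`: the Fourier multiplier which is `1` for `⟨j,k⟩ < 0`, `1/2`
at the zero mode, `0` for `⟨j,k⟩ > 0`. -/
def Pp (k : Fin d → ℝ) (u : Coeffs d) : Coeffs d := fun j =>
  if dotk k j < 0 then u j else if dotk k j = 0 then u j / 2 else 0

/-- The complementary projection `P̄ = I - P`. -/
def Pb (k : Fin d → ℝ) (u : Coeffs d) : Coeffs d := u - Pp k u

/-- The Fourier coefficients of the complex conjugate function. -/
def conjC (u : Coeffs d) : Coeffs d := fun j => (starRingEnd ℂ) (u (-j))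

/-- The Fourier coefficients of the product of two functions (convolution). -/
def cmul (u v : Coeffs d) : Coeffs d := fun j => ∑' m : Freq d, u m * v (j - m)

/-- The Fourier coefficients of the constant function `1`. -/
def oneC : Coeffs d := fun j => if j = 0 then 1 else 0

/-- `u` is holomorphic: its Fourier coefficients vanish for `⟨j,k⟩ > 0`. -/
def Holo (k : Fin d → ℝ) (u : Coeffs d) : Prop := ∀ j : Freq d, 0 < dotk k j → u j = 0

/-- The coefficients of `2 Re u`. -/
def twoRe (u : Coeffs d) : Coeffs d := u + conjC u

/-- The coefficients of `2 Im u`. -/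
def twoIm (u : Coeffs d) : Coeffs d := fun j => (u j - conjC u j) / Complex.I

/-- The coefficients of `u²`. -/
def csq (u : Coeffs d) : Coeffs d := cmul u u

/-- The coefficients of `|u|² = u·conj(u)`. -/
def absSqC (u : Coeffs d) : Coeffs d := cmul u (conjC u)

/-- The advection velocity `b := 2 Re P[R(1-conj Y)]`. -/
def bC (k : Fin d → ℝ) (R Y : Coeffs d) : Coeffs d :=
  twoRe (Pp k (cmul R (oneC - conjC Y)))

/-- The frequency shift `a := i(P̄[conj(R)·R_α] - P[R·conj(R)_α])`. -/
def aCf (k : Fin d → ℝ) (R : Coeffs d) : Coeffs d := fun j =>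
  Complex.I * ((Pb k (cmul (conjC R) (dAl k R)) - Pp k (cmul R (dAl k (conjC R)))) j)

/-- The auxiliary function
`M := P̄[conj(R)·Y_α − R_α·conj(Y)] + P[R·conj(Y)_α − conj(R)_α·Y]`. -/
def MCf (k : Fin d → ℝ) (R Y : Coeffs d) : Coeffs d :=
  Pb k (cmul (conjC R) (dAl k Y) - cmul (dAl k R) (conjC Y))
    + Pp k (cmul R (dAl k (conjC Y)) - cmul (dAl k (conjC R)) Y)

/-- `(W,R,Y)` solves the differentiated gravity water wave system on the time interval `I`:
`𝐖_t + b·𝐖_α + (1+𝐖)(1−conj Y)·R_α = (1+𝐖)M` and `R_t + b·R_α = i(Y − a(1−Y))`,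
where `Y = 𝐖/(1+𝐖)` (equivalently `(1+𝐖)·Y = 𝐖`), so that
`(1+𝐖)/(1+conj 𝐖) = (1+𝐖)(1−conj Y)` and `i(𝐖−a)/(1+𝐖) = i(Y − a(1−Y))`. -/
structure IsWWSol (k : Fin d → ℝ) (I : Set ℝ) (W R Y : ℝ → Coeffs d) : Prop where
  holoW : ∀ t ∈ I, Holo k (W t)
  holoR : ∀ t ∈ I, Holo k (R t)
  Ymem : ∀ t ∈ I, MemHs 0 (Y t)
  Ydef : ∀ t ∈ I, cmul (oneC + W t) (Y t) = W t
  eqW : ∀ t ∈ I, ∀ j : Freq d,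
    HasDerivWithinAt (fun τ => W τ j)
      ((cmul (oneC + W t) (MCf k (R t) (Y t))
        - cmul (bC k (R t) (Y t)) (dAl k (W t))
        - cmul (cmul (oneC + W t) (oneC - conjC (Y t))) (dAl k (R t))) j) I t
  eqR : ∀ t ∈ I, ∀ j : Freq d,
    HasDerivWithinAt (fun τ => R τ j)
      ((Complex.I • (Y t - cmul (aCf k (R t)) (oneC - Y t))
        - cmul (bC k (R t) (Y t)) (dAl k (R t))) j) I t

/-!
On the Fourier side the commutator has coefficients
`∑ₙ f̂(j-n) (χ⟨n,k⟩ - χ⟨j,k⟩) i⟨n,k⟩ ûₙ`, where `χ` is the symbol of `P`. The difference of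
symbols vanishes unless `⟨j,k⟩` and `⟨n,k⟩` have opposite signs, and then both are bounded by
`|⟨j-n,k⟩|`; hence, writing `⟨x⟩ = (1+x²)^{1/2}`, `a = ⟨j,k⟩` and `b = ⟨n,k⟩`,
`⟨a⟩^{1/2} |χ b - χ a| |b| ≤ ⟨a-b⟩ ⟨b⟩^{1/2}`. So the `H^{0,1/2}`-weighted commutator is
dominated by the convolution of `G(m) = |f̂(m)| ⟨⟨m,k⟩⟩` with the `H^{0,1/2}`-weighted
coefficients of `u`, and Young's inequality `ℓ¹ * ℓ² ⊆ ℓ²` bounds it by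
`‖G‖_{ℓ¹} ‖u‖_{H^{0,1/2}}`. Finally `‖G‖_{ℓ¹} ≲ ‖f‖_{H^{s,1/2}}` by Cauchy–Schwarz, since
`⟨⟨m,k⟩⟩ ≲ ⟨m⟩` makes `∑ₘ ⟨m⟩^{-2s} ⟨⟨m,k⟩⟩` converge for `2s - 1 > d`.
-/
theorem summable_and_tsum_le_sqrt_mul_sqrt {ι : Type*} {a w : ι → ℝ} (ha : ∀ i, 0 ≤ a i)
    (hw : ∀ i, 0 < w i) (hw_inv : Summable fun i => (w i)⁻¹)
    (hwa : Summable fun i => w i * a i ^ 2) :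
    Summable a ∧ ∑' i, a i ≤ √(∑' i, (w i)⁻¹) * √(∑' i, w i * a i ^ 2) := by
  have hfac : ∀ i, √(w i)⁻¹ * (√(w i) * a i) = a i := fun i => by
    rw [← mul_assoc, ← Real.sqrt_mul (inv_nonneg.2 (hw i).le), inv_mul_cancel₀ (hw i).ne',
      Real.sqrt_one, one_mul]
  have hf2 : ∀ i, √(w i)⁻¹ ^ (2 : ℝ) = (w i)⁻¹ := fun i => by
    rw [Real.rpow_two, Real.sq_sqrt (inv_nonneg.2 (hw i).le)]
  have hg2 : ∀ i, (√(w i) * a i) ^ (2 : ℝ) = w i * a i ^ 2 := fun i => by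
    rw [Real.rpow_two, mul_pow, Real.sq_sqrt (hw i).le]
  have h := Real.summable_and_inner_le_Lp_mul_Lq_tsum_of_nonneg Real.HolderConjugate.two_two
    (f := fun i => √(w i)⁻¹) (g := fun i => √(w i) * a i) (fun i => Real.sqrt_nonneg _)
    (fun i => mul_nonneg (Real.sqrt_nonneg _) (ha i)) (by simpa only [hf2] using hw_inv)
    (by simpa only [hg2] using hwa)
  simp only [hfac, hf2, hg2, ← Real.sqrt_eq_rpow] at h
  exact h

theorem summable_prod_apply_of_nonneg {ι κ : Type*} [Fintype ι] {h : κ → ℝ}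
    (h0 : ∀ n, 0 ≤ h n) (hs : Summable h) : Summable fun m : ι → κ => ∏ i, h (m i) := by
  classical
  refine summable_of_sum_le (c := ∏ _i : ι, ∑' n, h n)
    (fun m => Finset.prod_nonneg fun i _ => h0 _) fun t => ?_
  calc ∑ m ∈ t, ∏ i, h (m i)
      ≤ ∑ m ∈ Fintype.piFinset fun i => t.image (· i), ∏ i, h (m i) :=
        Finset.sum_le_sum_of_subset_of_nonneg
          (fun m hm => Fintype.mem_piFinset.2 fun i => Finset.mem_image_of_mem _ hm)
          fun m _ _ => Finset.prod_nonneg fun i _ => h0 _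
    _ = ∏ i, ∑ n ∈ t.image (· i), h n := (Finset.prod_univ_sum _ _).symm
    _ ≤ ∏ _i : ι, ∑' n, h n :=
        Finset.prod_le_prod (fun i _ => Finset.sum_nonneg fun n _ => h0 n)
          fun i _ => hs.sum_le_tsum _ fun n _ => h0 n

theorem summable_and_tsum_sq_sum_comp_sub_mul_le {ι : Type*} [AddCommGroup ι] {G : ι → ℝ}
    (hG0 : ∀ i, 0 ≤ G i) (hG : Summable G) (F : Finset ι) (v : ι → ℝ) :
    Summable (fun j => (∑ n ∈ F, G (j - n) * v n) ^ 2) ∧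
      ∑' j, (∑ n ∈ F, G (j - n) * v n) ^ 2 ≤ (∑' i, G i) ^ 2 * ∑ n ∈ F, v n ^ 2 := by
  classical
  have hshift : ∀ n, Summable fun j => G (j - n) := fun n => (Equiv.subRight n).summable_iff.2 hG
  have hmaj : Summable fun j => (∑' i, G i) * ∑ n ∈ F, G (j - n) * v n ^ 2 :=
    (summable_sum fun n _ => (hshift n).mul_right _).mul_left _
  have hpoint : ∀ j, (∑ n ∈ F, G (j - n) * v n) ^ 2 ≤
      (∑' i, G i) * ∑ n ∈ F, G (j - n) * v n ^ 2 := fun j => by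
    have hcs := Finset.sum_sq_le_sum_mul_sum_of_sq_le_mul F (r := fun n => G (j - n) * v n)
      (fun n _ => hG0 (j - n)) (fun n _ => mul_nonneg (hG0 (j - n)) (sq_nonneg (v n)))
      (fun n _ => (by ring : (G (j - n) * v n) ^ 2 = G (j - n) * (G (j - n) * v n ^ 2)).le)
    refine hcs.trans (mul_le_mul_of_nonneg_right ?_
      (Finset.sum_nonneg fun n _ => mul_nonneg (hG0 _) (sq_nonneg _)))
    rw [← Finset.sum_image (g := fun n => j - n) fun x _ y _ h => sub_right_injective h]
    exact hG.sum_le_tsum _ fun i _ => hG0 i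
  refine ⟨.of_nonneg_of_le (fun j => sq_nonneg _) hpoint hmaj, ?_⟩
  calc ∑' j, (∑ n ∈ F, G (j - n) * v n) ^ 2
      ≤ ∑' j, (∑' i, G i) * ∑ n ∈ F, G (j - n) * v n ^ 2 :=
        Summable.tsum_le_tsum hpoint (.of_nonneg_of_le (fun j => sq_nonneg _) hpoint hmaj) hmaj
    _ = (∑' i, G i) ^ 2 * ∑ n ∈ F, v n ^ 2 := by
        rw [tsum_mul_left, Summable.tsum_finsetSum fun n _ => (hshift n).mul_right _, sq,
          mul_assoc]
        congr 1
        rw [Finset.mul_sum]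
        refine Finset.sum_congr rfl fun n _ => ?_
        rw [tsum_mul_right, ← (Equiv.subRight n).tsum_eq G]; rfl

theorem summable_one_add_sq_rpow_neg {q : ℝ} (hq : 1 / 2 < q) :
    Summable fun n : ℤ => (1 + (n : ℝ) ^ 2) ^ (-q) := by
  refine (Real.summable_abs_int_rpow (b := 2 * q) (by linarith)).of_norm_bounded_eventually ?_
  filter_upwards [eventually_cofinite_ne 0] with n hn
  rw [Real.norm_of_nonneg (by positivity)]
  calc (1 + (n : ℝ) ^ 2) ^ (-q) ≤ ((n : ℝ) ^ 2) ^ (-q) :=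
        Real.rpow_le_rpow_of_nonpos (by positivity) (by linarith) (by linarith)
    _ = |(n : ℝ)| ^ (-(2 * q)) := by
        rw [← sq_abs, ← Real.rpow_natCast, ← Real.rpow_mul (abs_nonneg _)]
        ring_nf

theorem jb_pos (j : Freq d) : 0 < jb j :=
  Real.sqrt_pos.2 (by positivity)

theorem jb_sq (j : Freq d) : jb j ^ 2 = 1 + ∑ i, ((j i : ℝ)) ^ 2 :=
  Real.sq_sqrt (by positivity)

theorem summable_jb_rpow_neg {r : ℝ} (hr : (d : ℝ) < r) :
    Summable fun m : Freq d => jb m ^ (-r) := by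
  rcases Nat.eq_zero_or_pos d with rfl | hd
  · exact .of_finite
  have hd' : (0 : ℝ) < d := by exact_mod_cast hd
  have hq : 1 / 2 < r / (2 * d) := by rw [lt_div_iff₀ (by positivity)]; linarith
  refine (summable_prod_apply_of_nonneg (ι := Fin d) (fun n => by positivity)
    (summable_one_add_sq_rpow_neg hq)).of_nonneg_of_le
    (fun m => Real.rpow_nonneg (jb_pos m).le _) fun m => ?_
  have hprod : ∏ i, (1 + ((m i : ℤ) : ℝ) ^ 2) ≤ (jb m ^ 2) ^ d := by
    rw [jb_sq]
    calc ∏ i, (1 + ((m i : ℤ) : ℝ) ^ 2) ≤ ∏ _i : Fin d, (1 + ∑ i, ((m i : ℤ) : ℝ) ^ 2) :=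
          Finset.prod_le_prod (fun i _ => by positivity) fun i _ => by
            gcongr
            exact Finset.single_le_sum (f := fun i => ((m i : ℤ) : ℝ) ^ 2)
              (fun i _ => sq_nonneg _) (Finset.mem_univ i)
      _ = _ := by rw [Finset.prod_const, Finset.card_univ, Fintype.card_fin]
  calc jb m ^ (-r) = ((jb m ^ 2) ^ d) ^ (-(r / (2 * d))) := by
        rw [← pow_mul, ← Real.rpow_natCast, ← Real.rpow_mul (jb_pos m).le]
        congr 1
        push_cast
        field_simp
    _ ≤ (∏ i, (1 + ((m i : ℤ) : ℝ) ^ 2)) ^ (-(r / (2 * d))) :=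
        Real.rpow_le_rpow_of_nonpos (Finset.prod_pos fun i _ => by positivity) hprod
          (by linarith)
    _ = ∏ i, (1 + ((m i : ℤ) : ℝ) ^ 2) ^ (-(r / (2 * d))) :=
        (Real.finsetProd_rpow _ _ (fun i _ => by positivity) _).symm

def japaneseBracket (x : ℝ) : ℝ := √(1 + x ^ 2)

theorem japaneseBracket_pos (x : ℝ) : 0 < japaneseBracket x :=
  Real.sqrt_pos.2 (by positivity)

theorem abs_le_japaneseBracket (x : ℝ) : |x| ≤ japaneseBracket x := by
  rw [← Real.sqrt_sq_eq_abs]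
  exact Real.sqrt_le_sqrt (by linarith)

theorem japaneseBracket_le_of_abs_le {x y : ℝ} (h : |x| ≤ |y|) :
    japaneseBracket x ≤ japaneseBracket y := by
  have := sq_le_sq.2 h
  exact Real.sqrt_le_sqrt (by linarith)

theorem wt_half (k : Fin d → ℝ) (s : ℝ) (j : Freq d) :
    wt k s (1 / 2) j = jb j ^ (2 * s) * japaneseBracket (dotk k j) := by
  rw [wt, japaneseBracket, Real.sqrt_eq_rpow]

theorem wt_zero_half (k : Fin d → ℝ) (j : Freq d) :
    wt k 0 (1 / 2) j = japaneseBracket (dotk k j) := by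
  rw [wt_half, mul_zero, Real.rpow_zero, one_mul]

theorem abs_le_jb (j : Freq d) (i : Fin d) : |(j i : ℝ)| ≤ jb j := by
  rw [← Real.sqrt_sq_eq_abs]
  refine Real.sqrt_le_sqrt ?_
  have := Finset.single_le_sum (f := fun i => ((j i : ℤ) : ℝ) ^ 2) (fun i _ => sq_nonneg _)
    (Finset.mem_univ i)
  linarith

theorem japaneseBracket_dotk_le (k : Fin d → ℝ) (m : Freq d) :
    japaneseBracket (dotk k m) ≤ √(1 + (∑ i, |k i|) ^ 2) * jb m := by
  set K := ∑ i, |k i|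
  have hdot : |dotk k m| ≤ K * jb m := by
    calc |dotk k m| ≤ ∑ i, |(m i : ℝ) * k i| := Finset.abs_sum_le_sum_abs _ _
      _ = ∑ i, |(m i : ℝ)| * |k i| := by simp only [abs_mul]
      _ ≤ ∑ i, jb m * |k i| := by gcongr with i; exact abs_le_jb m i
      _ = K * jb m := by rw [← Finset.mul_sum, mul_comm]
  have hdot2 : dotk k m ^ 2 ≤ K ^ 2 * jb m ^ 2 := by
    rw [← mul_pow, ← sq_abs]
    exact pow_le_pow_left₀ (abs_nonneg _) hdot 2
  have hjb : 1 ≤ jb m ^ 2 := by rw [jb_sq]; exact le_add_of_nonneg_right (by positivity)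
  rw [← Real.sqrt_sq (jb_pos m).le, ← Real.sqrt_mul (by positivity)]
  exact Real.sqrt_le_sqrt (by nlinarith)

theorem summable_jb_rpow_neg_mul_japaneseBracket (k : Fin d → ℝ) {s : ℝ}
    (hs : ((d : ℝ) + 1) / 2 < s) :
    Summable fun m : Freq d => jb m ^ (-(2 * s)) * japaneseBracket (dotk k m) := by
  refine ((summable_jb_rpow_neg (r := 2 * s - 1) (by linarith)).mul_left
    √(1 + (∑ i, |k i|) ^ 2)).of_nonneg_of_le
    (fun m => mul_nonneg (Real.rpow_nonneg (jb_pos m).le _) (japaneseBracket_pos _).le)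
    fun m => ?_
  calc jb m ^ (-(2 * s)) * japaneseBracket (dotk k m)
      ≤ jb m ^ (-(2 * s)) * (√(1 + (∑ i, |k i|) ^ 2) * jb m) :=
        mul_le_mul_of_nonneg_left (japaneseBracket_dotk_le k m) (Real.rpow_nonneg (jb_pos m).le _)
    _ = √(1 + (∑ i, |k i|) ^ 2) * jb m ^ (-(2 * s - 1)) := by
        rw [show -(2 * s - 1) = -(2 * s) + 1 by ring, Real.rpow_add_one (jb_pos m).ne']
        ring

theorem exists_tsum_norm_mul_japaneseBracket_le (k : Fin d → ℝ) {s : ℝ}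
    (hs : ((d : ℝ) + 1) / 2 < s) :
    ∃ B, 0 ≤ B ∧ ∀ f : Coeffs d, MemSob k s (1 / 2) f →
      Summable (fun m => ‖f m‖ * japaneseBracket (dotk k m)) ∧
        ∑' m, ‖f m‖ * japaneseBracket (dotk k m) ≤ B * sobNorm k s (1 / 2) f := by
  refine ⟨√(∑' m, jb m ^ (-(2 * s)) * japaneseBracket (dotk k m)), Real.sqrt_nonneg _,
    fun f hf => ?_⟩
  have hw : ∀ m : Freq d, 0 < jb m ^ (2 * s) * (japaneseBracket (dotk k m))⁻¹ := fun m =>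
    mul_pos (Real.rpow_pos_of_pos (jb_pos m) _) (inv_pos.2 (japaneseBracket_pos _))
  have hw_inv : ∀ m : Freq d, (jb m ^ (2 * s) * (japaneseBracket (dotk k m))⁻¹)⁻¹
      = jb m ^ (-(2 * s)) * japaneseBracket (dotk k m) := fun m => by
    rw [mul_inv, inv_inv, Real.rpow_neg (jb_pos m).le]
  have hwa : ∀ m : Freq d, jb m ^ (2 * s) * (japaneseBracket (dotk k m))⁻¹
      * (‖f m‖ * japaneseBracket (dotk k m)) ^ 2 = wt k s (1 / 2) m * ‖f m‖ ^ 2 := fun m => by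
    rw [wt_half]
    field_simp [(japaneseBracket_pos (dotk k m)).ne']
  have h := summable_and_tsum_le_sqrt_mul_sqrt (a := fun m => ‖f m‖ * japaneseBracket (dotk k m))
    (fun m => mul_nonneg (norm_nonneg _) (japaneseBracket_pos _).le) hw
    (by simpa only [hw_inv] using summable_jb_rpow_neg_mul_japaneseBracket k hs)
    (hf.congr fun m => (hwa m).symm)
  simp only [hw_inv, hwa] at h
  exact h

def projSymbol (x : ℝ) : ℝ := if x < 0 then 1 else if x = 0 then 1 / 2 else 0

theorem projSymbol_eq_of_mul_pos {a b : ℝ} (h : 0 < a * b) : projSymbol a = projSymbol b := by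
  rcases mul_pos_iff.1 h with ⟨ha, hb⟩ | ⟨ha, hb⟩
  · simp [projSymbol, ha.not_gt, hb.not_gt, ha.ne', hb.ne']
  · simp [projSymbol, ha, hb]

theorem abs_projSymbol_sub_le_one (a b : ℝ) : |projSymbol a - projSymbol b| ≤ 1 := by
  unfold projSymbol
  split_ifs <;> norm_num [abs_le]

theorem sqrt_japaneseBracket_mul_abs_projSymbol_sub_le (a b : ℝ) :
    √(japaneseBracket a) * (|projSymbol b - projSymbol a| * |b|)
      ≤ japaneseBracket (a - b) * √(japaneseBracket b) := by
  rcases eq_or_ne (projSymbol b) (projSymbol a) with h | h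
  · rw [h, sub_self, abs_zero, zero_mul, mul_zero]
    exact mul_nonneg (japaneseBracket_pos _).le (Real.sqrt_nonneg _)
  have hab : a * b ≤ 0 :=
    not_lt.1 fun hpos => h (projSymbol_eq_of_mul_pos (by linarith [mul_comm a b]))
  have ha : |a| ≤ |a - b| := sq_le_sq.1 (by nlinarith)
  have hb : |b| ≤ |a - b| := sq_le_sq.1 (by nlinarith)
  have hbb : |b| ≤ japaneseBracket (a - b) := hb.trans (abs_le_japaneseBracket _)
  have hsq : japaneseBracket a * b ^ 2 ≤ japaneseBracket (a - b) ^ 2 * japaneseBracket b := by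
    calc japaneseBracket a * b ^ 2 = japaneseBracket a * (|b| * |b|) := by rw [← sq, sq_abs]
      _ ≤ japaneseBracket (a - b) * (japaneseBracket (a - b) * japaneseBracket b) :=
          mul_le_mul (japaneseBracket_le_of_abs_le ha)
            (mul_le_mul hbb (abs_le_japaneseBracket b) (abs_nonneg _) (japaneseBracket_pos _).le)
            (by positivity) (japaneseBracket_pos _).le
      _ = japaneseBracket (a - b) ^ 2 * japaneseBracket b := by ring
  calc √(japaneseBracket a) * (|projSymbol b - projSymbol a| * |b|)
      ≤ √(japaneseBracket a) * |b| := by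
        gcongr
        exact mul_le_of_le_one_left (abs_nonneg _) (abs_projSymbol_sub_le_one _ _)
    _ = √(japaneseBracket a * b ^ 2) := by
        rw [Real.sqrt_mul (japaneseBracket_pos _).le, Real.sqrt_sq_eq_abs]
    _ ≤ √(japaneseBracket (a - b) ^ 2 * japaneseBracket b) := Real.sqrt_le_sqrt hsq
    _ = japaneseBracket (a - b) * √(japaneseBracket b) := by
        rw [Real.sqrt_mul (sq_nonneg _), Real.sqrt_sq (japaneseBracket_pos _).le]

theorem dotk_sub (k : Fin d → ℝ) (j n : Freq d) : dotk k (j - n) = dotk k j - dotk k n := by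
  simp only [dotk, Pi.sub_apply, Int.cast_sub, sub_mul, Finset.sum_sub_distrib]

theorem Pp_apply (k : Fin d → ℝ) (v : Coeffs d) (j : Freq d) :
    Pp k v j = (projSymbol (dotk k j) : ℂ) * v j := by
  unfold Pp projSymbol
  split_ifs <;> push_cast <;> ring

theorem cmul_apply_eq_sum {v : Coeffs d} (f : Coeffs d) {F : Finset (Freq d)}
    (hF : ∀ n ∉ F, v n = 0) (j : Freq d) : cmul f v j = ∑ n ∈ F, f (j - n) * v n := by
  rw [cmul, ← (Equiv.subLeft j).tsum_eq]
  simp only [Equiv.subLeft_apply, sub_sub_cancel]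
  exact tsum_eq_sum fun n hn => by rw [hF n hn, mul_zero]

theorem commutator_apply_eq_sum (k : Fin d → ℝ) (f : Coeffs d) {u : Coeffs d}
    {F : Finset (Freq d)} (hF : ∀ n ∉ F, u n = 0) (j : Freq d) :
    (cmul f (Pp k (dAl k u)) - Pp k (cmul f (dAl k u))) j
      = ∑ n ∈ F, f (j - n) * ((projSymbol (dotk k n) - projSymbol (dotk k j) : ℝ) : ℂ)
          * (Complex.I * dotk k n * u n) := by
  have hdAl : ∀ n ∉ F, dAl k u n = 0 := fun n hn => by rw [dAl, hF n hn, mul_zero]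
  have hPdAl : ∀ n ∉ F, Pp k (dAl k u) n = 0 := fun n hn => by rw [Pp_apply, hdAl n hn, mul_zero]
  rw [Pi.sub_apply, cmul_apply_eq_sum f hPdAl, Pp_apply, cmul_apply_eq_sum f hdAl, Finset.mul_sum,
    ← Finset.sum_sub_distrib]
  refine Finset.sum_congr rfl fun n _ => ?_
  rw [Pp_apply, dAl]
  push_cast
  ring

theorem sqrt_japaneseBracket_mul_norm_commutator_le (k : Fin d → ℝ) (f : Coeffs d) {u : Coeffs d}
    {F : Finset (Freq d)} (hF : ∀ n ∉ F, u n = 0) (j : Freq d) :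
    √(japaneseBracket (dotk k j)) * ‖(cmul f (Pp k (dAl k u)) - Pp k (cmul f (dAl k u))) j‖
      ≤ ∑ n ∈ F, ‖f (j - n)‖ * japaneseBracket (dotk k (j - n))
          * (√(japaneseBracket (dotk k n)) * ‖u n‖) := by
  rw [commutator_apply_eq_sum k f hF]
  refine (mul_le_mul_of_nonneg_left (norm_sum_le _ _) (Real.sqrt_nonneg _)).trans ?_
  rw [Finset.mul_sum]
  refine Finset.sum_le_sum fun n _ => ?_
  have hkey := sqrt_japaneseBracket_mul_abs_projSymbol_sub_le (dotk k j) (dotk k n)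
  rw [← dotk_sub] at hkey
  simp only [norm_mul, Complex.norm_real, Complex.norm_I, Real.norm_eq_abs, one_mul]
  calc √(japaneseBracket (dotk k j)) * (‖f (j - n)‖
        * |projSymbol (dotk k n) - projSymbol (dotk k j)| * (|dotk k n| * ‖u n‖))
      = ‖f (j - n)‖ * ‖u n‖ * (√(japaneseBracket (dotk k j))
          * (|projSymbol (dotk k n) - projSymbol (dotk k j)| * |dotk k n|)) := by ring
    _ ≤ ‖f (j - n)‖ * ‖u n‖
          * (japaneseBracket (dotk k (j - n)) * √(japaneseBracket (dotk k n))) := by gcongr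
    _ = _ := by ring

theorem sobNorm_le_sqrt_tsum_of_le (k : Fin d → ℝ) (s θ : ℝ) {c : Coeffs d}
    {g : Freq d → ℝ} (hg : Summable g) (h : ∀ j, wt k s θ j * ‖c j‖ ^ 2 ≤ g j) :
    sobNorm k s θ c ≤ √(∑' j, g j) := by
  have h0 : ∀ j, 0 ≤ wt k s θ j * ‖c j‖ ^ 2 := fun j =>
    mul_nonneg (mul_nonneg (Real.rpow_nonneg (jb_pos j).le _) (Real.rpow_nonneg (by positivity) _))
      (sq_nonneg _)
  exact Real.sqrt_le_sqrt (Summable.tsum_le_tsum h (.of_nonneg_of_le h0 h hg) hg)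

theorem commutator_H012_general
    (d : ℕ) (k : Fin d → ℝ)
    (s : ℝ) (hs : ((d : ℝ) + 1) / 2 < s) :
    ∃ C : ℝ, 0 < C ∧
      ∀ f u : Coeffs d, MemSob k s (1/2) f → (Function.support u).Finite →
        sobNorm k 0 (1/2) (cmul f (Pp k (dAl k u)) - Pp k (cmul f (dAl k u)))
          ≤ C * sobNorm k s (1/2) f * sobNorm k 0 (1/2) u := by
  obtain ⟨B, hB0, hB⟩ := exists_tsum_norm_mul_japaneseBracket_le k hs
  refine ⟨B + 1, by positivity, fun f u hf hu => ?_⟩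
  obtain ⟨hG, hGB⟩ := hB f hf
  set F := hu.toFinset
  have hF : ∀ n ∉ F, u n = 0 := fun n hn => by simpa [F] using hn
  set v := fun n => √(japaneseBracket (dotk k n)) * ‖u n‖
  obtain ⟨hconv, hyoung⟩ := summable_and_tsum_sq_sum_comp_sub_mul_le
    (fun m => mul_nonneg (norm_nonneg (f m)) (japaneseBracket_pos _).le) hG F v
  have hu_norm : sobNorm k 0 (1/2) u = √(∑ n ∈ F, v n ^ 2) := by
    rw [sobNorm, tsum_eq_sum fun n hn => by rw [hF n hn, norm_zero]; ring]
    simp only [v, wt_zero_half, mul_pow, Real.sq_sqrt (japaneseBracket_pos _).le]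
  refine (sobNorm_le_sqrt_tsum_of_le k 0 (1/2) hconv fun j => ?_).trans ?_
  · rw [wt_zero_half, ← Real.sq_sqrt (japaneseBracket_pos (dotk k j)).le, ← mul_pow]
    exact pow_le_pow_left₀ (by positivity)
      (sqrt_japaneseBracket_mul_norm_commutator_le k f hF j) 2
  calc √(∑' j, (∑ n ∈ F, ‖f (j - n)‖ * japaneseBracket (dotk k (j - n)) * v n) ^ 2)
      ≤ √((∑' m, ‖f m‖ * japaneseBracket (dotk k m)) ^ 2 * ∑ n ∈ F, v n ^ 2) :=
        Real.sqrt_le_sqrt hyoung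
    _ = (∑' m, ‖f m‖ * japaneseBracket (dotk k m)) * sobNorm k 0 (1/2) u := by
        rw [Real.sqrt_mul (sq_nonneg _), Real.sqrt_sq (tsum_nonneg fun m =>
          mul_nonneg (norm_nonneg _) (japaneseBracket_pos _).le), hu_norm]
    _ ≤ (B + 1) * sobNorm k s (1/2) f * sobNorm k 0 (1/2) u := by
        have hf0 : 0 ≤ sobNorm k s (1/2) f := Real.sqrt_nonneg _
        gcongr
        · exact Real.sqrt_nonneg _
        · nlinarith

/-- **Lemma 5.2, bound (com3) (Commutator bound, `H^{0,1/2}` version).** Let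
`s > (d+1)/2`. There is a constant `C = C(d,s,k)` such that for every
`f ∈ H^{s,1/2}(𝕋^d)` and every trigonometric polynomial `u` on `𝕋^d`,
`‖f·P[∂_α u] − P[f·∂_α u]‖_{H^{0,1/2}} ≤ C ‖f‖_{H^{s,1/2}} ‖u‖_{H^{0,1/2}}`;
consequently `[f,P]∂_α` extends to a bounded operator on `H^{0,1/2}(𝕋^d)`. -/
theorem commutator_H012
    (d : ℕ) (hd : 1 ≤ d) (k : Fin d → ℝ) (hk : Indep k)
    (s : ℝ) (hs : ((d : ℝ) + 1) / 2 < s) :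
    ∃ C : ℝ, 0 < C ∧
      ∀ f u : Coeffs d, MemSob k s (1/2) f → (Function.support u).Finite →
        sobNorm k 0 (1/2) (cmul f (Pp k (dAl k u)) - Pp k (cmul f (dAl k u)))
          ≤ C * sobNorm k s (1/2) f * sobNorm k 0 (1/2) u :=
  commutator_H012_general d k s hs
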